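/- Every permutation σ of a finite set can be written as the composition of two permutations, each of which is a product of pairwise disjoint transpositions, and each having at most ⌊size(σ)/2⌋ transpositions, where size(σ) denotes the number of non-fixed points of σ. -/
import Mathlib

private lemma stmt_2_aux {α : Type*} [Fintype α] [DecidableEq α] :
    ∀ n (σ : Equiv.Perm α), σ.support.card ≤ n → ∀ x : α,
    ∃ l₁ l₂ : List (Equiv.Perm α),
      (∀ τ ∈ l₁, τ.IsSwap) ∧ l₁.Pairwise Equiv.Perm.Disjoint ∧
      (∀ τ ∈ l₂, τ.IsSwap) ∧ l₂.Pairwise Equiv.Perm.Disjoint ∧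
      l₁.length ≤ σ.support.card / 2 ∧ l₂.length ≤ σ.support.card / 2 ∧
      σ = l₂.prod * l₁.prod ∧
      (∀ τ ∈ l₁, τ.support ⊆ σ.support \ {x}) ∧
      (∀ τ ∈ l₂, τ.support ⊆ σ.support) := by
  intro n
  induction n with
  | zero =>
    intro σ hσ x
    have h1 : σ = 1 := by
      rw [← Equiv.Perm.support_eq_empty_iff, ← Finset.card_eq_zero]; omega
    exact ⟨[], [], by simp, by simp, by simp, by simp, by simp, by simp,
      by simp [h1], by simp, by simp⟩
  | succ n ih =>
    intro σ hσ x
    by_cases h1 : σ = 1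
    · exact ⟨[], [], by simp, by simp, by simp, by simp, by simp, by simp,
        by simp [h1], by simp, by simp⟩
    -- support is nonempty; choose the base point x₀
    have hne : σ.support.Nonempty := by
      rw [Finset.nonempty_iff_ne_empty, Ne, Equiv.Perm.support_eq_empty_iff]
      exact h1
    obtain ⟨x₀, hx₀, hx₀x⟩ : ∃ x₀ ∈ σ.support, (x ∈ σ.support → x₀ = x) := by
      by_cases hx : x ∈ σ.support
      · exact ⟨x, hx, fun _ => rfl⟩
      · exact ⟨hne.choose, hne.choose_spec, fun h => absurd h hx⟩
    -- the final subset goal reduces to avoiding x₀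
    have hsub : σ.support \ {x₀} ⊆ σ.support \ {x} := by
      intro a ha
      rw [Finset.mem_sdiff] at ha ⊢
      refine ⟨ha.1, ?_⟩
      by_cases hx : x ∈ σ.support
      · rw [hx₀x hx] at ha; exact ha.2
      · simp only [Finset.mem_singleton]
        rintro rfl; exact hx ha.1
    set y := σ x₀ with hy_def
    have hyx₀ : y ≠ x₀ := by rwa [← Equiv.Perm.mem_support]
    have hy_mem : y ∈ σ.support := Equiv.Perm.apply_mem_support.mpr hx₀
    have hcard2 : 2 ≤ σ.support.card := by
      have : ({x₀, y} : Finset α) ⊆ σ.support := by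
        intro a ha; simp at ha; rcases ha with rfl | rfl <;> assumption
      calc 2 = ({x₀, y} : Finset α).card := by
              rw [Finset.card_insert_of_notMem (by simp [hyx₀.symm]), Finset.card_singleton]
            _ ≤ σ.support.card := Finset.card_le_card this
    by_cases hA : σ y = x₀
    · -- Case A: (x₀ y) is a 2-cycle of σ
      set σ' := Equiv.swap x₀ y * σ with hσ'def
      have hfix : ∀ a, a ≠ x₀ → a ≠ y → σ' a = σ a := by
        intro a ha hay
        simp only [hσ'def, Equiv.Perm.mul_apply]
        apply Equiv.swap_apply_of_ne_of_ne
        · intro h; exact hay (σ.injective (by rw [h, ← hA]))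
        · intro h; exact ha (σ.injective (by rw [h, hy_def]))
      have hfx : σ' x₀ = x₀ := by
        simp [hσ'def, Equiv.Perm.mul_apply, ← hy_def, Equiv.swap_apply_right]
      have hfy : σ' y = y := by
        simp [hσ'def, Equiv.Perm.mul_apply, hA, Equiv.swap_apply_left]
      have hsupp' : σ'.support ⊆ σ.support \ {x₀, y} := by
        intro a ha
        rw [Equiv.Perm.mem_support] at ha
        have hax : a ≠ x₀ := by rintro rfl; exact ha hfx
        have hay : a ≠ y := by rintro rfl; exact ha hfy
        rw [Finset.mem_sdiff, Equiv.Perm.mem_support]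
        refine ⟨?_, by simp [hax, hay]⟩
        rw [← hfix a hax hay]; exact ha
      have hcard' : σ'.support.card ≤ σ.support.card - 2 := by
        have h2 : ({x₀, y} : Finset α) ⊆ σ.support := by
          intro a ha; simp at ha; rcases ha with rfl | rfl <;> assumption
        have := Finset.card_le_card hsupp'
        rw [Finset.card_sdiff_of_subset h2] at this
        have hc2 : ({x₀, y} : Finset α).card = 2 := by
          rw [Finset.card_insert_of_notMem (by simp [hyx₀.symm]), Finset.card_singleton]
        omega
      obtain ⟨l₁, l₂, hl₁s, hl₁p, hl₂s, hl₂p, hl₁len, hl₂len, hprod, hl₁sub, hl₂sub⟩ :=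
        ih σ' (by omega) x₀
      have hsupp'x : ∀ τ ∈ l₂, τ.support ⊆ σ.support \ {x₀, y} :=
        fun τ hτ => (hl₂sub τ hτ).trans hsupp'
      refine ⟨l₁, Equiv.swap x₀ y :: l₂, hl₁s, hl₁p, ?_, ?_, by omega, ?_, ?_, ?_, ?_⟩
      · intro τ hτ
        rcases List.mem_cons.mp hτ with rfl | hτ
        · exact ⟨x₀, y, hyx₀.symm, rfl⟩
        · exact hl₂s τ hτ
      · rw [List.pairwise_cons]
        refine ⟨fun τ hτ => ?_, hl₂p⟩
        rw [Equiv.Perm.disjoint_iff_disjoint_support, Equiv.Perm.support_swap hyx₀.symm]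
        rw [Finset.disjoint_left]
        intro a ha ha'
        have := hsupp'x τ hτ ha'
        rw [Finset.mem_sdiff] at this
        exact this.2 ha
      · simp only [List.length_cons]; omega
      · rw [List.prod_cons, mul_assoc, ← hprod, hσ'def, ← mul_assoc,
          Equiv.swap_mul_self, one_mul]
      · intro τ hτ
        refine ((hl₁sub τ hτ).trans ?_).trans hsub
        intro a ha
        rw [Finset.mem_sdiff] at ha
        have := hsupp' ha.1
        rw [Finset.mem_sdiff] at this ⊢
        exact ⟨this.1, by simp only [Finset.mem_singleton]; intro h; exact this.2 (by simp [h])⟩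
      · intro τ hτ
        rcases List.mem_cons.mp hτ with rfl | hτ
        · rw [Equiv.Perm.support_swap hyx₀.symm]
          intro a ha; simp at ha; rcases ha with rfl | rfl <;> assumption
        · exact (hsupp'x τ hτ).trans (Finset.sdiff_subset)
    · -- Case B: σ y ≠ x₀
      set w := σ.symm x₀ with hw_def
      have hσw : σ w = x₀ := by simp [hw_def]
      have hwx₀ : w ≠ x₀ := by
        rintro h; rw [h] at hσw; exact hyx₀ (hy_def ▸ hσw)
      have hwy : w ≠ y := by
        intro h; exact hA (h ▸ hσw)
      have hw_mem : w ∈ σ.support := by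
        rw [Equiv.Perm.mem_support, hσw]; exact hwx₀.symm
      set σ' := Equiv.swap x₀ y * σ * Equiv.swap y w with hσ'def
      have hσy_ne_x : σ y ≠ x₀ := hA
      have hσy_ne_y : σ y ≠ y := Equiv.Perm.mem_support.mp hy_mem
      have hfx : σ' x₀ = x₀ := by
        simp only [hσ'def, Equiv.Perm.mul_apply]
        rw [Equiv.swap_apply_of_ne_of_ne hyx₀.symm hwx₀.symm, ← hy_def,
          Equiv.swap_apply_right]
      have hfy : σ' y = y := by
        simp only [hσ'def, Equiv.Perm.mul_apply]
        rw [Equiv.swap_apply_left, hσw, Equiv.swap_apply_left]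
      have hfw : σ' w = σ y := by
        simp only [hσ'def, Equiv.Perm.mul_apply]
        rw [Equiv.swap_apply_right, Equiv.swap_apply_of_ne_of_ne hσy_ne_x hσy_ne_y]
      have hfix : ∀ a, a ≠ x₀ → a ≠ y → a ≠ w → σ' a = σ a := by
        intro a hax hay haw
        simp only [hσ'def, Equiv.Perm.mul_apply]
        rw [Equiv.swap_apply_of_ne_of_ne hay haw]
        apply Equiv.swap_apply_of_ne_of_ne
        · intro h; exact haw (σ.injective (h.trans hσw.symm))
        · intro h; exact hax (σ.injective (h.trans hy_def))
      have hsupp' : σ'.support ⊆ σ.support \ {x₀, y} := by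
        intro a ha
        rw [Equiv.Perm.mem_support] at ha
        have hax : a ≠ x₀ := by rintro rfl; exact ha hfx
        have hay : a ≠ y := by rintro rfl; exact ha hfy
        rw [Finset.mem_sdiff, Equiv.Perm.mem_support]
        refine ⟨?_, by simp [hax, hay]⟩
        by_cases haw : a = w
        · subst haw; rw [hσw]; exact hwx₀.symm
        · rw [← hfix a hax hay haw]; exact ha
      have hcard' : σ'.support.card ≤ σ.support.card - 2 := by
        have h2 : ({x₀, y} : Finset α) ⊆ σ.support := by
          intro a ha; simp at ha; rcases ha with rfl | rfl <;> assumption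
        have := Finset.card_le_card hsupp'
        rw [Finset.card_sdiff_of_subset h2] at this
        have hc2 : ({x₀, y} : Finset α).card = 2 := by
          rw [Finset.card_insert_of_notMem (by simp [hyx₀.symm]), Finset.card_singleton]
        omega
      obtain ⟨l₁, l₂, hl₁s, hl₁p, hl₂s, hl₂p, hl₁len, hl₂len, hprod, hl₁sub, hl₂sub⟩ :=
        ih σ' (by omega) w
      have hl₁notyw : ∀ τ ∈ l₁, Disjoint (Equiv.swap y w).support τ.support := by
        intro τ hτ
        rw [Equiv.Perm.support_swap hwy.symm, Finset.disjoint_left]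
        intro a ha ha'
        have h3 := hl₁sub τ hτ ha'
        rw [Finset.mem_sdiff] at h3
        have h4 := hsupp' h3.1
        rw [Finset.mem_sdiff] at h4
        simp only [Finset.mem_insert, Finset.mem_singleton] at ha h4
        rcases ha with rfl | rfl
        · exact h4.2 (Or.inr rfl)
        · exact h3.2 (Finset.mem_singleton_self w)
      refine ⟨l₁ ++ [Equiv.swap y w], Equiv.swap x₀ y :: l₂, ?_, ?_, ?_, ?_, ?_, ?_, ?_, ?_, ?_⟩
      · intro τ hτ
        rcases List.mem_append.mp hτ with hτ | hτ
        · exact hl₁s τ hτ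
        · rw [List.mem_singleton] at hτ; subst hτ
          exact ⟨y, w, hwy.symm, rfl⟩
      · rw [List.pairwise_append]
        refine ⟨hl₁p, List.pairwise_singleton _ _, fun τ hτ τ' hτ' => ?_⟩
        rw [List.mem_singleton] at hτ'; subst hτ'
        exact (Equiv.Perm.disjoint_iff_disjoint_support.mpr (hl₁notyw τ hτ)).symm
      · intro τ hτ
        rcases List.mem_cons.mp hτ with rfl | hτ
        · exact ⟨x₀, y, hyx₀.symm, rfl⟩
        · exact hl₂s τ hτ
      · rw [List.pairwise_cons]
        refine ⟨fun τ hτ => ?_, hl₂p⟩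
        rw [Equiv.Perm.disjoint_iff_disjoint_support, Equiv.Perm.support_swap hyx₀.symm]
        rw [Finset.disjoint_left]
        intro a ha ha'
        have h3 := (hl₂sub τ hτ).trans hsupp' ha'
        rw [Finset.mem_sdiff] at h3
        simp only [Finset.mem_insert, Finset.mem_singleton] at ha h3
        exact h3.2 ha
      · rw [List.length_append, List.length_singleton]; omega
      · simp only [List.length_cons]; omega
      · rw [List.prod_cons, List.prod_append, List.prod_singleton]
        have : l₂.prod * l₁.prod = σ' := hprod.symm
        calc σ = Equiv.swap x₀ y * σ' * Equiv.swap y w := by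
                rw [hσ'def,
                  show Equiv.swap x₀ y * (Equiv.swap x₀ y * σ * Equiv.swap y w) *
                      Equiv.swap y w =
                    (Equiv.swap x₀ y * Equiv.swap x₀ y) * σ *
                      (Equiv.swap y w * Equiv.swap y w) by group,
                  Equiv.swap_mul_self, Equiv.swap_mul_self, one_mul, mul_one]
             _ = Equiv.swap x₀ y * (l₂.prod * (l₁.prod * Equiv.swap y w)) := by
                rw [← this]; group
      · intro τ hτ
        rcases List.mem_append.mp hτ with hτ | hτ
        · refine ((hl₁sub τ hτ).trans ?_).trans hsub
          intro a ha
          rw [Finset.mem_sdiff] at ha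
          have h4 := hsupp' ha.1
          rw [Finset.mem_sdiff] at h4 ⊢
          exact ⟨h4.1, by simp only [Finset.mem_singleton]; intro h; exact h4.2 (by simp [h])⟩
        · rw [List.mem_singleton] at hτ; subst hτ
          refine Finset.Subset.trans ?_ hsub
          rw [Equiv.Perm.support_swap hwy.symm]
          intro a ha
          simp only [Finset.mem_insert, Finset.mem_singleton] at ha
          rw [Finset.mem_sdiff, Finset.mem_singleton]
          rcases ha with rfl | rfl
          · exact ⟨hy_mem, hyx₀⟩
          · exact ⟨hw_mem, hwx₀⟩
      · intro τ hτ
        rcases List.mem_cons.mp hτ with rfl | hτ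
        · rw [Equiv.Perm.support_swap hyx₀.symm]
          intro a ha; simp at ha; rcases ha with rfl | rfl <;> assumption
        · exact ((hl₂sub τ hτ).trans hsupp').trans Finset.sdiff_subset

/-- Every permutation σ of a finite set is a composition of two permutations,
each a product of pairwise disjoint transpositions, each with at most
⌊size(σ)/2⌋ transpositions, where size(σ) is the number of non-fixed points. -/
theorem stmt_2 {α : Type*} [Fintype α] [DecidableEq α] (σ : Equiv.Perm α) :
    ∃ l₁ l₂ : List (Equiv.Perm α),
      (∀ τ ∈ l₁, τ.IsSwap) ∧ l₁.Pairwise Equiv.Perm.Disjoint ∧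
      (∀ τ ∈ l₂, τ.IsSwap) ∧ l₂.Pairwise Equiv.Perm.Disjoint ∧
      l₁.length ≤ σ.support.card / 2 ∧ l₂.length ≤ σ.support.card / 2 ∧
      σ = l₂.prod * l₁.prod := by
  classical
  by_cases h : IsEmpty α
  · exact ⟨[], [], by simp, by simp, by simp, by simp, by simp, by simp,
      by apply Equiv.ext; intro a; exact (h.false a).elim⟩
  · rw [not_isEmpty_iff] at h
    obtain ⟨l₁, l₂, h1, h2, h3, h4, h5, h6, h7, _, _⟩ :=
      stmt_2_aux σ.support.card σ le_rfl h.some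
    exact ⟨l₁, l₂, h1, h2, h3, h4, h5, h6, h7⟩
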